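/- arXiv:2302.14559 — 4 statements merged into one kernel-verified Lean document; each statement's English description precedes it below -/
import Mathlib

section
/- Let Φ(N,n) be weights satisfying ∑_{n∈ℤ} Φ(N,n) = 1 with finite support in n for each N, let ϑ > 0, and set C(t) = limsup_{N→+∞} N^ϑ |∑_{n∈ℤ} Φ(N,n) e^{2πint}| for t ∈ ℝ. Then for every integrable function f on 𝕋^d, every m ∈ ℤ^d \ {0} and every α ∈ 𝕋^d, limsup_{N→+∞} { N^ϑ sup_{x∈𝕋^d} |D_N^{Φ,α} f(x)| } ≥ C(m·α) |f̂(m)|. -/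
open MeasureTheory Filter Finset
open scoped Real ENNReal Topology BigOperators

noncomputable section

/-- Distance from a real number to the nearest integer. -/
def dnint (t : ℝ) : ℝ := |t - (round t : ℝ)|

/-- Euclidean norm of an integer vector. -/
def znorm {d : ℕ} (m : Fin d → ℤ) : ℝ := Real.sqrt (∑ i, ((m i : ℝ)) ^ 2)

/-- A function on `ℝ^d` which is `ℤ^d`-periodic (i.e. a function on the torus `𝕋^d`). -/
def ZdPeriodic {d : ℕ} (f : (Fin d → ℝ) → ℂ) : Prop :=
  ∀ (x : Fin d → ℝ) (k : Fin d → ℤ), f (x + fun i => (k i : ℝ)) = f x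

/-- The unit cube, a fundamental domain of the torus `𝕋^d`. -/
def cube (d : ℕ) : Set (Fin d → ℝ) := Set.Icc 0 1

/-- Fourier coefficient of a (periodic) function. -/
def fcoef {d : ℕ} (f : (Fin d → ℝ) → ℂ) (m : Fin d → ℤ) : ℂ :=
  ∫ x in cube d,
    f x * Complex.exp (-(2 * Real.pi * Complex.I * ((∑ i, (m i : ℝ) * x i : ℝ) : ℂ)))

/-- Membership in the Sobolev space `W^{δ,2}(𝕋^d)`. -/
def MemSobolev {d : ℕ} (δ : ℝ) (f : (Fin d → ℝ) → ℂ) : Prop :=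
  Summable (fun m : Fin d → ℤ => (1 + znorm m ^ 2) ^ δ * ‖fcoef f m‖ ^ 2)

/-- The Sobolev norm `‖f‖_{δ,2}`. -/
def sobNorm {d : ℕ} (δ : ℝ) (f : (Fin d → ℝ) → ℂ) : ℝ :=
  Real.sqrt (∑' m : Fin d → ℤ, (1 + znorm m ^ 2) ^ δ * ‖fcoef f m‖ ^ 2)

/-- The kernel `∑_{n ∈ ℤ} Φ(N,n) e^{2πint}` of the summation method. -/
def kern (Φ : ℕ → ℤ → ℂ) (N : ℕ) (t : ℝ) : ℂ :=
  ∑' n : ℤ, Φ N n * Complex.exp (2 * Real.pi * Complex.I * (n : ℂ) * (t : ℂ))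

/-- The weighted discrepancy `D_N^{Φ,α} f(x)`. -/
def disc {d : ℕ} (Φ : ℕ → ℤ → ℂ) (α : Fin d → ℝ) (f : (Fin d → ℝ) → ℂ)
    (N : ℕ) (x : Fin d → ℝ) : ℂ :=
  (∑' n : ℤ, Φ N n * f (x + n • α)) - ∫ y in cube d, f y

/-- `α ∈ ℝ^d` is an irrational vector: `1, α₁, …, α_d` are linearly independent over `ℚ`. -/
def IrrationalVec {d : ℕ} (α : Fin d → ℝ) : Prop :=
  ∀ (m : Fin d → ℤ) (k : ℤ), (∑ i, (m i : ℝ) * α i) + (k : ℝ) = 0 → m = 0 ∧ k = 0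


/-!
Translating a periodic function by `a` multiplies its `m`-th Fourier coefficient by
`e^{2πi m·a}`, and for `m ≠ 0` the constant `∫ f` has vanishing `m`-th coefficient. Hence the
`m`-th Fourier coefficient of `D_N^{Φ,α} f` is `(∑ₙ Φ(N,n) e^{2πin m·α}) f̂(m)`. Since the cube
has volume one, a Fourier coefficient is bounded by the supremum of the function, which gives
`N^ϑ |∑ₙ Φ(N,n) e^{2πin m·α}| |f̂(m)| ≤ N^ϑ sup |D_N^{Φ,α} f|` for every `N`; take the limsup.
-/

open scoped Pointwise

variable {d : ℕ}

abbrev intLattice (d : ℕ) : AddSubgroup (Fin d → ℝ) :=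
  (Submodule.span ℤ (Set.range (Pi.basisFun ℝ (Fin d)))).toAddSubgroup

instance : Countable (intLattice d) :=
  inferInstanceAs (Countable (Submodule.span ℤ (Set.range (Pi.basisFun ℝ (Fin d)))))

lemma ZdPeriodic.vadd_intLattice {f : (Fin d → ℝ) → ℂ} (hf : ZdPeriodic f)
    (g : intLattice d) (x : Fin d → ℝ) : f (g +ᵥ x) = f x := by
  choose k hk using ((Pi.basisFun ℝ (Fin d)).mem_span_iff_repr_mem ℤ g.1).mp g.2
  have hg : (g : Fin d → ℝ) = fun i => (k i : ℝ) := funext fun i => by simpa using (hk i).symm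
  rw [AddSubgroup.vadd_def, vadd_eq_add, hg, add_comm]
  exact hf x k

lemma fundamentalDomain_pi_basisFun_ae_eq_cube :
    ZSpan.fundamentalDomain (Pi.basisFun ℝ (Fin d)) =ᵐ[volume] cube d := by
  rw [ZSpan.fundamentalDomain_pi_basisFun]
  exact Measure.univ_pi_Ico_ae_eq_Icc

lemma image_add_const_fundamentalDomain (a : Fin d → ℝ) :
    (· + a) '' ZSpan.fundamentalDomain (Pi.basisFun ℝ (Fin d)) =
      a +ᵥ ZSpan.fundamentalDomain (Pi.basisFun ℝ (Fin d)) := by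
  rw [← Set.image_vadd]
  simp_rw [vadd_eq_add, add_comm]

lemma isAddFundamentalDomain_vadd_fundamentalDomain (a : Fin d → ℝ) :
    IsAddFundamentalDomain (intLattice d)
      (a +ᵥ ZSpan.fundamentalDomain (Pi.basisFun ℝ (Fin d))) volume :=
  (ZSpan.isAddFundamentalDomain' _ volume).vadd_of_comm a

lemma ZdPeriodic.integrableOn_cube_comp_add_right {f : (Fin d → ℝ) → ℂ} (hf : ZdPeriodic f)
    (hint : IntegrableOn f (cube d)) (a : Fin d → ℝ) :
    IntegrableOn (fun x => f (x + a)) (cube d) := by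
  have hF := ZSpan.isAddFundamentalDomain' (Pi.basisFun ℝ (Fin d)) volume
  have hshift : IntegrableOn f (a +ᵥ ZSpan.fundamentalDomain (Pi.basisFun ℝ (Fin d))) :=
    ((isAddFundamentalDomain_vadd_fundamentalDomain a).integrableOn_iff hF
      hf.vadd_intLattice).2 (hint.congr_set_ae fundamentalDomain_pi_basisFun_ae_eq_cube)
  rw [← image_add_const_fundamentalDomain,
    (measurePreserving_add_right volume a).integrableOn_image (measurableEmbedding_addRight a)]
    at hshift
  exact hshift.congr_set_ae fundamentalDomain_pi_basisFun_ae_eq_cube.symm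

lemma ZdPeriodic.setIntegral_cube_comp_add_right {f : (Fin d → ℝ) → ℂ} (hf : ZdPeriodic f)
    (a : Fin d → ℝ) : ∫ x in cube d, f (x + a) = ∫ x in cube d, f x := by
  have hF := ZSpan.isAddFundamentalDomain' (Pi.basisFun ℝ (Fin d)) volume
  rw [← setIntegral_congr_set fundamentalDomain_pi_basisFun_ae_eq_cube,
    ← setIntegral_congr_set fundamentalDomain_pi_basisFun_ae_eq_cube,
    ← (measurePreserving_add_right volume a).setIntegral_image_emb (measurableEmbedding_addRight a),
    image_add_const_fundamentalDomain]
  exact (isAddFundamentalDomain_vadd_fundamentalDomain a).setIntegral_eq hF hf.vadd_intLattice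

def torusChar (m : Fin d → ℤ) (x : Fin d → ℝ) : ℂ :=
  Complex.exp (-(2 * Real.pi * Complex.I * ((∑ i, (m i : ℝ) * x i : ℝ) : ℂ)))

lemma fcoef_eq_setIntegral (f : (Fin d → ℝ) → ℂ) (m : Fin d → ℤ) :
    fcoef f m = ∫ x in cube d, f x * torusChar m x := rfl

lemma torusChar_add (m : Fin d → ℤ) (x y : Fin d → ℝ) :
    torusChar m (x + y) = torusChar m x * torusChar m y := by
  simp only [torusChar, ← Complex.exp_add, Pi.add_apply, mul_add, Finset.sum_add_distrib]
  push_cast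
  ring_nf

lemma torusChar_intCast (m k : Fin d → ℤ) : torusChar m (fun i => (k i : ℝ)) = 1 := by
  rw [torusChar, show -(2 * Real.pi * Complex.I * ((∑ i, (m i : ℝ) * (k i : ℝ) : ℝ) : ℂ)) =
    ((-∑ i, m i * k i : ℤ) : ℂ) * (2 * Real.pi * Complex.I) by push_cast; ring]
  exact Complex.exp_int_mul_two_pi_mul_I _

lemma norm_torusChar (m : Fin d → ℤ) (x : Fin d → ℝ) : ‖torusChar m x‖ = 1 := by
  rw [torusChar, Complex.norm_exp]
  simp

lemma continuous_torusChar (m : Fin d → ℤ) : Continuous (torusChar m) := by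
  unfold torusChar
  fun_prop

lemma ZdPeriodic.mul_torusChar {f : (Fin d → ℝ) → ℂ} (hf : ZdPeriodic f) (m : Fin d → ℤ) :
    ZdPeriodic (fun x => f x * torusChar m x) := fun x k => by
  simp only [hf x k, torusChar_add, torusChar_intCast, mul_one]

lemma MeasureTheory.IntegrableOn.mul_torusChar {f : (Fin d → ℝ) → ℂ}
    (hf : IntegrableOn f (cube d)) (m : Fin d → ℤ) :
    IntegrableOn (fun x => f x * torusChar m x) (cube d) :=
  hf.mul_bdd (continuous_torusChar m).aestronglyMeasurable
    (Eventually.of_forall fun x => (norm_torusChar m x).le)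

lemma ZdPeriodic.fcoef_comp_add_right {f : (Fin d → ℝ) → ℂ} (hf : ZdPeriodic f)
    (m : Fin d → ℤ) (a : Fin d → ℝ) :
    fcoef (fun x => f (x + a)) m =
      Complex.exp (2 * Real.pi * Complex.I * ((∑ i, (m i : ℝ) * a i : ℝ) : ℂ)) * fcoef f m := by
  set e := Complex.exp (2 * Real.pi * Complex.I * ((∑ i, (m i : ℝ) * a i : ℝ) : ℂ))
  have he : e * torusChar m a = 1 := by
    rw [torusChar, ← Complex.exp_add, add_neg_cancel, Complex.exp_zero]
  calc fcoef (fun x => f (x + a)) m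
      = ∫ x in cube d, e * (f (x + a) * torusChar m (x + a)) := by
        refine integral_congr_ae (Eventually.of_forall fun x => ?_)
        change f (x + a) * torusChar m x = e * (f (x + a) * torusChar m (x + a))
        rw [torusChar_add]
        linear_combination (f (x + a) * torusChar m x) * he.symm
    _ = e * fcoef f m := by
        rw [integral_const_mul, (hf.mul_torusChar m).setIntegral_cube_comp_add_right a,
          fcoef_eq_setIntegral]

lemma fcoef_const {m : Fin d → ℤ} (hm : m ≠ 0) (c : ℂ) : fcoef (fun _ => c) m = 0 := by
  obtain ⟨i, hi⟩ := Function.ne_iff.mp hm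
  have hi : (m i : ℝ) ≠ 0 := by exact_mod_cast hi
  set a : Fin d → ℝ := Pi.single i (1 / (2 * m i))
  have ha : ∑ j, (m j : ℝ) * a j = 1 / 2 := by
    simp only [a, Pi.single_apply, mul_ite, mul_zero, Finset.sum_ite_eq', Finset.mem_univ,
      if_true]
    field_simp
  -- translating by `a` multiplies the coefficient by `e^{πi} = -1`
  have hflip := ZdPeriodic.fcoef_comp_add_right (f := fun _ => c) (fun _ _ => rfl) m a
  rw [ha, show 2 * Real.pi * Complex.I * ((1 / 2 : ℝ) : ℂ) = Real.pi * Complex.I by push_cast; ring,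
    Complex.exp_pi_mul_I] at hflip
  linear_combination hflip / 2

lemma fcoef_sub {f g : (Fin d → ℝ) → ℂ} (hf : IntegrableOn f (cube d))
    (hg : IntegrableOn g (cube d)) (m : Fin d → ℤ) :
    fcoef (f - g) m = fcoef f m - fcoef g m := by
  simp only [fcoef_eq_setIntegral, Pi.sub_apply, sub_mul]
  exact integral_sub (hf.mul_torusChar m) (hg.mul_torusChar m)

lemma fcoef_finsetSum {ι : Type*} (s : Finset ι) {g : ι → (Fin d → ℝ) → ℂ}
    (hg : ∀ n ∈ s, IntegrableOn (g n) (cube d)) (m : Fin d → ℤ) :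
    fcoef (fun x => ∑ n ∈ s, g n x) m = ∑ n ∈ s, fcoef (g n) m := by
  simp only [fcoef_eq_setIntegral, Finset.sum_mul]
  exact integral_finsetSum s fun n hn => (hg n hn).mul_torusChar m

lemma fcoef_const_mul (c : ℂ) (f : (Fin d → ℝ) → ℂ) (m : Fin d → ℤ) :
    fcoef (fun x => c * f x) m = c * fcoef f m := by
  simp only [fcoef_eq_setIntegral, mul_assoc]
  exact integral_const_mul c _

lemma fcoef_disc (Φ : ℕ → ℤ → ℂ) (N : ℕ) (hsupp : (Function.support (Φ N)).Finite)
    {f : (Fin d → ℝ) → ℂ} (hper : ZdPeriodic f) (hint : IntegrableOn f (cube d))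
    {m : Fin d → ℤ} (hm : m ≠ 0) (α : Fin d → ℝ) :
    fcoef (disc Φ α f N) m = kern Φ N (∑ i, (m i : ℝ) * α i) * fcoef f m := by
  set s := hsupp.toFinset
  have hΦ : ∀ n ∉ s, Φ N n = 0 := fun n hn => by simpa [s] using hn
  have hdisc : disc Φ α f N =
      (fun x => ∑ n ∈ s, Φ N n * f (x + n • α)) - fun _ => ∫ y in cube d, f y := by
    funext x
    rw [disc, tsum_eq_sum fun n hn => by rw [hΦ n hn, zero_mul], Pi.sub_apply]
  have hkern : kern Φ N (∑ i, (m i : ℝ) * α i) = ∑ n ∈ s, Φ N n *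
      Complex.exp (2 * Real.pi * Complex.I * (n : ℂ) * ((∑ i, (m i : ℝ) * α i : ℝ) : ℂ)) :=
    tsum_eq_sum fun n hn => by rw [hΦ n hn, zero_mul]
  have hshift : ∀ n : ℤ, IntegrableOn (fun x => Φ N n * f (x + n • α)) (cube d) := fun n =>
    (hper.integrableOn_cube_comp_add_right hint (n • α)).const_mul (Φ N n)
  rw [hdisc, fcoef_sub (integrable_finsetSum s fun n _ => hshift n)
    (integrableOn_const measure_Icc_lt_top.ne), fcoef_const hm, sub_zero,
    fcoef_finsetSum s fun n _ => hshift n, hkern, Finset.sum_mul]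
  refine Finset.sum_congr rfl fun n _ => ?_
  have hpair : ∑ i, (m i : ℝ) * (n • α) i = n * ∑ i, (m i : ℝ) * α i := by
    simp only [Pi.smul_apply, zsmul_eq_mul, Finset.mul_sum]
    exact Finset.sum_congr rfl fun i _ => by ring
  rw [fcoef_const_mul, hper.fcoef_comp_add_right, hpair]
  push_cast
  ring_nf

lemma ofReal_norm_fcoef_le_iSup_nnnorm (g : (Fin d → ℝ) → ℂ) (m : Fin d → ℤ) :
    ENNReal.ofReal ‖fcoef g m‖ ≤ ⨆ x, (‖g x‖₊ : ℝ≥0∞) := by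
  rw [ofReal_norm, fcoef_eq_setIntegral]
  calc ‖∫ x in cube d, g x * torusChar m x‖ₑ
      ≤ ∫⁻ x in cube d, ‖g x * torusChar m x‖ₑ := enorm_integral_le_lintegral_enorm _
    _ ≤ ∫⁻ _ in cube d, ⨆ y, (‖g y‖₊ : ℝ≥0∞) := by
        refine lintegral_mono fun x => ?_
        rw [enorm_mul, ← ofReal_norm (torusChar m x), norm_torusChar, ENNReal.ofReal_one, mul_one]
        exact le_iSup (fun y => (‖g y‖₊ : ℝ≥0∞)) x
    _ = ⨆ y, (‖g y‖₊ : ℝ≥0∞) := by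
        rw [setLIntegral_const, cube, Real.volume_Icc_pi]
        simp

theorem stmt_2_general (d : ℕ) (Φ : ℕ → ℤ → ℂ)
    (hsupp : ∀ N : ℕ, 1 ≤ N → (Function.support (Φ N)).Finite)
    (ϑ : ℝ)
    (f : (Fin d → ℝ) → ℂ) (hper : ZdPeriodic f)
    (hint : IntegrableOn f (cube d) volume)
    (m : Fin d → ℤ) (hm : m ≠ 0) (α : Fin d → ℝ) :
    (Filter.limsup (fun N : ℕ =>
        ENNReal.ofReal ((N : ℝ) ^ ϑ * ‖kern Φ N (∑ i, (m i : ℝ) * α i)‖)) Filter.atTop)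
      * ENNReal.ofReal ‖fcoef f m‖
    ≤ Filter.limsup (fun N : ℕ =>
        ENNReal.ofReal ((N : ℝ) ^ ϑ) *
          ⨆ x : Fin d → ℝ, (‖disc Φ α f N x‖₊ : ℝ≥0∞)) Filter.atTop := by
  have hbound : ∀ N : ℕ, 1 ≤ N →
      ENNReal.ofReal ((N : ℝ) ^ ϑ * ‖kern Φ N (∑ i, (m i : ℝ) * α i)‖) *
        ENNReal.ofReal ‖fcoef f m‖ ≤
        ENNReal.ofReal ((N : ℝ) ^ ϑ) * ⨆ x, (‖disc Φ α f N x‖₊ : ℝ≥0∞) := fun N hN => by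
    rw [ENNReal.ofReal_mul (by positivity), mul_assoc, ← ENNReal.ofReal_mul (norm_nonneg _),
      ← norm_mul, ← fcoef_disc Φ N (hsupp N hN) hper hint hm α]
    gcongr
    exact ofReal_norm_fcoef_le_iSup_nnnorm _ m
  rw [mul_comm, ← ENNReal.limsup_mul_const_of_ne_top ENNReal.ofReal_ne_top]
  exact limsup_le_limsup (eventually_atTop.mpr ⟨1, hbound⟩)

/-- Theorem 1.3: the speed of convergence `N^{-ϑ}` cannot be accelerated; lower bound
via `C(m·α)|f̂(m)|`, where `C(t) = limsup_N N^ϑ |∑_n Φ(N,n)e^{2πint}|`. -/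
theorem stmt_2 (d : ℕ) (hd : 0 < d) (Φ : ℕ → ℤ → ℂ)
    (hsupp : ∀ N : ℕ, 1 ≤ N → (Function.support (Φ N)).Finite)
    (hsum : ∀ N : ℕ, 1 ≤ N → ∑' n : ℤ, Φ N n = 1)
    (ϑ : ℝ) (hϑ : 0 < ϑ)
    (f : (Fin d → ℝ) → ℂ) (hper : ZdPeriodic f)
    (hint : IntegrableOn f (cube d) volume)
    (m : Fin d → ℤ) (hm : m ≠ 0) (α : Fin d → ℝ) :
    (Filter.limsup (fun N : ℕ =>
        ENNReal.ofReal ((N : ℝ) ^ ϑ * ‖kern Φ N (∑ i, (m i : ℝ) * α i)‖)) Filter.atTop)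
      * ENNReal.ofReal ‖fcoef f m‖
    ≤ Filter.limsup (fun N : ℕ =>
        ENNReal.ofReal ((N : ℝ) ^ ϑ) *
          ⨆ x : Fin d → ℝ, (‖disc Φ α f N x‖₊ : ℝ≥0∞)) Filter.atTop :=
  stmt_2_general d Φ hsupp ϑ f hper hint m hm α
end
end

section
/- For every ϑ > 0 and every α ∈ ℝ^d, the series ∑_{m∈ℤ^d\{0}} |m|^{−dϑ} ‖m·α‖^{−ϑ} diverges, i.e. equals +∞. -/
open MeasureTheory Filter Finset
open scoped Real ENNReal Topology BigOperators

noncomputable section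

/-!
By Dirichlet's approximation theorem (pigeonhole on the fractional parts of `q·α`), for every
`N ≥ 1` there is `q ∈ ℤ^d \ {0}` with `|q| ≤ √d N` and `‖q·α‖ < N^{-d}`; the summand at such a `q`
is at least `(√d)^{-dϑ}`, whatever `N` is. If `‖q·α‖ = 0` for some `q ≠ 0`, that summand is `+∞`.
Otherwise the values `‖q·α‖ > 0` along these `q` tend to `0`, so infinitely many distinct summands
exceed the fixed constant `(√d)^{-dϑ} > 0`.
-/

theorem ENNReal.rpow_le_rpow_of_nonpos {x y : ℝ≥0∞} {z : ℝ} (hxy : x ≤ y) (hz : z ≤ 0) :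
    y ^ z ≤ x ^ z := by
  have h := ENNReal.inv_le_inv.2 (ENNReal.rpow_le_rpow hxy (neg_nonneg.2 hz))
  rwa [← ENNReal.rpow_neg, ← ENNReal.rpow_neg, neg_neg] at h

theorem Set.infinite_of_forall_exists_lt_of_pos {ι : Type*} {T : Set ι} (δ : ι → ℝ)
    (hpos : ∀ i ∈ T, 0 < δ i) (hsmall : ∀ ε > 0, ∃ i ∈ T, δ i < ε) : T.Infinite := by
  intro hfin
  obtain ⟨i, hi, -⟩ := hsmall 1 one_pos
  obtain ⟨m, hm, hmin⟩ := Set.exists_min_image T δ hfin ⟨i, hi⟩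
  obtain ⟨j, hj, hlt⟩ := hsmall (δ m) (hpos m hm)
  exact (hmin j hj).not_gt hlt

theorem dnint_sub_le_abs_fract_sub (x y : ℝ) : dnint (x - y) ≤ |Int.fract x - Int.fract y| := by
  have h := round_le (x - y) (⌊x⌋ - ⌊y⌋)
  rwa [show x - y - ((⌊x⌋ - ⌊y⌋ : ℤ) : ℝ) = Int.fract x - Int.fract y by
    rw [Int.fract, Int.fract]; push_cast; ring] at h

/-- Pigeonhole: the `n` intervals `[k/n, (k+1)/n)` cover `[0, 1)`. -/
theorem exists_ne_abs_fract_sub_lt {β : Type*} {s : Finset β} {n : ℕ} (hn : 0 < n)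
    (hcard : n < s.card) (x : β → ℝ) :
    ∃ a ∈ s, ∃ b ∈ s, a ≠ b ∧ |Int.fract (x a) - Int.fract (x b)| < 1 / n := by
  have hmaps : ∀ a ∈ s, ⌊(n : ℝ) * Int.fract (x a)⌋ ∈ Finset.Ico (0 : ℤ) n := by
    intro a _
    rw [Finset.mem_Ico, Int.floor_nonneg, Int.floor_lt]
    exact ⟨by positivity, by
      simpa using mul_lt_mul_of_pos_left (Int.fract_lt_one (x a)) (by positivity : (0 : ℝ) < n)⟩
  obtain ⟨a, ha, b, hb, hab, hfloor⟩ :=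
    Finset.exists_ne_map_eq_of_card_lt_of_maps_to (by simpa using hcard) hmaps
  refine ⟨a, ha, b, hb, hab, ?_⟩
  have h := Int.abs_sub_lt_one_of_floor_eq_floor hfloor
  rw [← mul_sub, abs_mul, Nat.abs_cast] at h
  rwa [lt_div_iff₀ (by positivity), mul_comm]

theorem exists_dnint_lt {ι : Type*} [Fintype ι] [Nonempty ι] (α : ι → ℝ) {N : ℕ} (hN : 0 < N) :
    ∃ q : ι → ℤ, q ≠ 0 ∧ (∀ i, |q i| ≤ N) ∧
      dnint (∑ i, (q i : ℝ) * α i) < 1 / (N : ℝ) ^ Fintype.card ι := by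
  classical
  set x : (ι → Fin (N + 1)) → ℝ := fun a => ∑ i, ((a i : ℕ) : ℝ) * α i
  have hcard : N ^ Fintype.card ι < (Finset.univ : Finset (ι → Fin (N + 1))).card := by
    simpa using Nat.pow_lt_pow_left (Nat.lt_succ_self N) Fintype.card_ne_zero
  obtain ⟨a, -, b, -, hab, hclose⟩ := exists_ne_abs_fract_sub_lt (by positivity) hcard x
  refine ⟨fun i => (a i : ℤ) - (b i : ℤ), fun h => hab ?_, fun i => ?_, ?_⟩
  · funext i
    exact Fin.ext (by simpa [sub_eq_zero] using congrFun h i)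
  · have := (a i).is_le; have := (b i).is_le
    simp only [abs_le]; omega
  · have hsum : ∑ i, (((a i : ℤ) - (b i : ℤ) : ℤ) : ℝ) * α i = x a - x b := by
      simp only [x, ← Finset.sum_sub_distrib, Int.cast_sub, Int.cast_natCast, sub_mul]
    rw [hsum]
    exact (dnint_sub_le_abs_fract_sub _ _).trans_lt (by exact_mod_cast hclose)

theorem znorm_le_sqrt_mul {d : ℕ} {m : Fin d → ℤ} {R : ℝ} (hR : 0 ≤ R)
    (hm : ∀ i, |(m i : ℝ)| ≤ R) : znorm m ≤ Real.sqrt d * R := by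
  have hsq : ∑ i, ((m i : ℝ)) ^ 2 ≤ d * R ^ 2 := by
    calc ∑ i, ((m i : ℝ)) ^ 2 ≤ ∑ _i : Fin d, R ^ 2 :=
          Finset.sum_le_sum fun i _ => sq_le_sq' (abs_le.1 (hm i)).1 (abs_le.1 (hm i)).2
      _ = d * R ^ 2 := by simp
  calc znorm m ≤ Real.sqrt (d * R ^ 2) := Real.sqrt_le_sqrt hsq
    _ = Real.sqrt d * R := by rw [Real.sqrt_mul (Nat.cast_nonneg d), Real.sqrt_sq hR]

theorem ofReal_rpow_le_ofReal_rpow_mul_ofReal_rpow {d : ℕ} {ϑ s N r δ : ℝ} (hϑ : 0 ≤ ϑ)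
    (hs : 0 < s) (hN : 0 < N) (hr : r ≤ s * N) (hδ : δ ≤ 1 / N ^ d) :
    ENNReal.ofReal s ^ (-((d : ℝ) * ϑ)) ≤
      ENNReal.ofReal r ^ (-((d : ℝ) * ϑ)) * ENNReal.ofReal δ ^ (-ϑ) := by
  have hexp : ENNReal.ofReal s ^ (-((d : ℝ) * ϑ)) =
      ENNReal.ofReal (s * N) ^ (-((d : ℝ) * ϑ)) * ENNReal.ofReal (1 / N ^ d) ^ (-ϑ) := by
    rw [ENNReal.ofReal_rpow_of_pos hs, ENNReal.ofReal_rpow_of_pos (by positivity),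
      ENNReal.ofReal_rpow_of_pos (by positivity), ← ENNReal.ofReal_mul (by positivity)]
    congr 1
    rw [Real.mul_rpow hs.le hN.le, one_div, Real.inv_rpow (by positivity),
      ← Real.rpow_natCast_mul hN.le, ← Real.rpow_neg (by positivity), mul_assoc,
      ← Real.rpow_add hN]
    simp
  rw [hexp]
  have hdϑ : -((d : ℝ) * ϑ) ≤ 0 := by simp only [neg_nonpos]; positivity
  exact mul_le_mul' (ENNReal.rpow_le_rpow_of_nonpos (ENNReal.ofReal_le_ofReal hr) hdϑ)
    (ENNReal.rpow_le_rpow_of_nonpos (ENNReal.ofReal_le_ofReal hδ) (by linarith))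

theorem exists_dnint_lt_and_sqrt_rpow_le {d : ℕ} (hd : 0 < d) {ϑ : ℝ} (hϑ : 0 ≤ ϑ)
    (α : Fin d → ℝ) {ε : ℝ} (hε : 0 < ε) :
    ∃ m : Fin d → ℤ, m ≠ 0 ∧ dnint (∑ i, (m i : ℝ) * α i) < ε ∧
      ENNReal.ofReal (Real.sqrt d) ^ (-((d : ℝ) * ϑ)) ≤
        ENNReal.ofReal (znorm m) ^ (-((d : ℝ) * ϑ)) *
          ENNReal.ofReal (dnint (∑ i, (m i : ℝ) * α i)) ^ (-ϑ) := by
  have : Nonempty (Fin d) := Fin.pos_iff_nonempty.1 hd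
  obtain ⟨n, hn⟩ := exists_nat_one_div_lt hε
  obtain ⟨q, hq0, hqN, hqα⟩ := exists_dnint_lt α n.succ_pos
  rw [Fintype.card_fin] at hqα
  have hN : (1 : ℝ) ≤ n.succ := by simp
  have hpow : 1 / (n.succ : ℝ) ^ d ≤ 1 / n.succ :=
    one_div_le_one_div_of_le (by positivity) (le_self_pow₀ hN hd.ne')
  refine ⟨q, hq0, hqα.trans (hpow.trans_lt (by simpa using hn)), ?_⟩
  refine ofReal_rpow_le_ofReal_rpow_mul_ofReal_rpow hϑ (by simpa using hd) (by positivity)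
    (znorm_le_sqrt_mul (by positivity) fun i => ?_) hqα.le
  exact_mod_cast hqN i

/-- Lemma 2.6 (i): for every `ϑ > 0` and every `α ∈ ℝ^d` the series
`∑_{m ≠ 0} |m|^{-dϑ}‖m·α‖^{-ϑ}` diverges (terms with `‖m·α‖ = 0` count as `+∞`). -/
theorem stmt_14 (d : ℕ) (hd : 0 < d) (ϑ : ℝ) (hϑ : 0 < ϑ) (α : Fin d → ℝ) :
    ∑' m : {m : Fin d → ℤ // m ≠ 0},
      (ENNReal.ofReal (znorm m.1)) ^ (-((d : ℝ) * ϑ)) *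
        (ENNReal.ofReal (dnint (∑ i, (m.1 i : ℝ) * α i))) ^ (-ϑ) = ⊤ := by
  by_cases hzero : ∃ m : Fin d → ℤ, m ≠ 0 ∧ dnint (∑ i, (m i : ℝ) * α i) = 0
  · obtain ⟨m, hm, h0⟩ := hzero
    refine ENNReal.tsum_eq_top_of_eq_top ⟨⟨m, hm⟩, ?_⟩
    rw [h0, ENNReal.ofReal_zero, ENNReal.zero_rpow_of_neg (neg_neg_of_pos hϑ)]
    have hdϑ : 0 ≤ (d : ℝ) * ϑ := by positivity
    exact ENNReal.mul_top (by simp [ENNReal.rpow_eq_zero_iff, hdϑ])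
  push Not at hzero
  have hc : ENNReal.ofReal (Real.sqrt d) ^ (-((d : ℝ) * ϑ)) ≠ 0 :=
    (ENNReal.rpow_pos (by simpa using hd) ENNReal.ofReal_ne_top).ne'
  by_contra htop
  refine Set.infinite_of_forall_exists_lt_of_pos
    (fun m : {m : Fin d → ℤ // m ≠ 0} => dnint (∑ i, (m.1 i : ℝ) * α i))
    (fun m _ => (abs_nonneg _).lt_of_ne' (hzero m.1 m.2)) (fun ε hε => ?_)
    (ENNReal.finite_const_le_of_tsum_ne_top htop hc)
  obtain ⟨m, hm, hmε, hmc⟩ := exists_dnint_lt_and_sqrt_rpow_le hd hϑ.le α hε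
  exact ⟨⟨m, hm⟩, hmc, hmε⟩
end
end

section
/- There exists a constant c > 0 such that for every positive integer N and every t ∈ ℝ, |(∑_{n=1}^{N} 1/n)^{−1} ∑_{n=1}^{N} e^{2πint}/n| ≤ min{1, c · log(1 + ‖t‖^{−1}) / log(1+N)}. Moreover, there exist constants c' > 0 and c'' > 0 such that for all sufficiently large N and all t with ‖t‖ ≥ c''/N, the reverse inequality |(∑_{n=1}^{N} 1/n)^{−1} ∑_{n=1}^{N} e^{2πint}/n| ≥ c' · log(1 + ‖t‖^{−1}) / log(1+N) holds. -/
open MeasureTheory Filter Finset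
open scoped Real ENNReal Topology BigOperators

noncomputable section

/-- The normalized logarithmic kernel `(∑_{n=1}^N 1/n)^{-1} ∑_{n=1}^N e^{2πint}/n`. -/
def logKern (N : ℕ) (t : ℝ) : ℂ :=
  (((∑ n ∈ Finset.Icc 1 N, (1 : ℝ) / n) : ℝ) : ℂ)⁻¹ *
    ∑ n ∈ Finset.Icc 1 N,
      Complex.exp (2 * Real.pi * Complex.I * (n : ℂ) * (t : ℂ)) / (n : ℂ)

/-!
Write `z = e(t)` and `s = ‖t‖`, so that `4s ≤ ‖1 - z‖ ≤ 8s`. Abel summation bounds the tail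
`∑_{M<n≤N} zⁿ/n` by `2 / ((M+1) ‖1 - z‖)`. For the upper bound, split the sum at `M = ⌊1/s⌋`:
the head is at most `H_M ≤ 1 + log (1/s)` and the tail at most `1/2`. For the lower bound, letting
the tail run to infinity (inside the disc, then on the circle by continuity) shows that the
partial sum is within `1/4` of `-log (1 - z)`, whose norm is at least `max (1/2, log (1/(8s)))`.
Dividing by `H_N ≍ log (1 + N)` gives both estimates.
-/

open Complex

theorem harmonic_mono : Monotone harmonic := fun _ _ h =>
  sum_le_sum_of_subset_of_nonneg (range_mono h) fun _ _ _ => by positivity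

theorem harmonic_cast_nonneg (N : ℕ) : (0 : ℝ) ≤ harmonic N := by
  exact_mod_cast harmonic_zero ▸ harmonic_mono N.zero_le

theorem one_le_log_of_three_le {x : ℝ} (hx : 3 ≤ x) : 1 ≤ Real.log x := by
  rw [Real.le_log_iff_exp_le (by linarith)]
  linarith [Real.exp_one_lt_d9]

section Abel

theorem sum_Ioc_one_div_sub_one_div {M N : ℕ} (hMN : M ≤ N) :
    ∑ n ∈ Ioc M N, (1 / n - 1 / (n + 1) : ℝ) = 1 / (M + 1) - 1 / (N + 1) := by
  induction N, hMN using Nat.le_induction with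
  | base => simp
  | succ N hMN ih =>
    rw [sum_Ioc_succ_top hMN, ih]
    push_cast
    ring

theorem one_sub_mul_sum_Ioc_pow_div {M N : ℕ} (hMN : M ≤ N) (w : ℂ) :
    (1 - w) * ∑ n ∈ Ioc M N, w ^ n / n =
      w ^ (M + 1) / ↑(M + 1) - w ^ (N + 1) / ↑(N + 1) -
        ∑ n ∈ Ioc M N, w ^ (n + 1) * ((1 / n - 1 / (n + 1) : ℝ) : ℂ) := by
  induction N, hMN using Nat.le_induction with
  | base => simp
  | succ N hMN ih =>
    rw [sum_Ioc_succ_top hMN, sum_Ioc_succ_top hMN, mul_add, ih]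
    have h₁ : (N : ℂ) + 1 ≠ 0 := Nat.cast_add_one_ne_zero N
    have h₂ : (N : ℂ) + 1 + 1 ≠ 0 := by exact_mod_cast Nat.succ_ne_zero (N + 1)
    push_cast
    field_simp
    ring

variable {w : ℂ}

theorem norm_pow_div_natCast_le (hw : ‖w‖ ≤ 1) (k n : ℕ) : ‖w ^ k / n‖ ≤ 1 / n := by
  rw [norm_div, norm_pow, Complex.norm_natCast]
  gcongr
  exact pow_le_one₀ (norm_nonneg w) hw

theorem norm_one_sub_mul_sum_Ioc_pow_div_le (hw : ‖w‖ ≤ 1) (M N : ℕ) :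
    ‖(1 - w) * ∑ n ∈ Ioc M N, w ^ n / n‖ ≤ 2 / (M + 1) := by
  rcases lt_or_ge N M with hNM | hMN
  · rw [Ioc_eq_empty_of_le hNM.le, sum_empty, mul_zero, norm_zero]
    positivity
  have hterm : ∀ n ∈ Ioc M N,
      ‖w ^ (n + 1) * ((1 / n - 1 / (n + 1) : ℝ) : ℂ)‖ ≤ 1 / n - 1 / (n + 1) := by
    intro n hn
    have hn : (1 : ℝ) ≤ n := by exact_mod_cast Nat.one_le_of_lt (mem_Ioc.1 hn).1
    have hcoef : 0 ≤ (1 / n - 1 / (n + 1) : ℝ) :=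
      sub_nonneg.2 (one_div_le_one_div_of_le (by linarith) (by linarith))
    rw [norm_mul, norm_real, Real.norm_of_nonneg hcoef, norm_pow]
    exact mul_le_of_le_one_left hcoef (pow_le_one₀ (norm_nonneg w) hw)
  rw [one_sub_mul_sum_Ioc_pow_div hMN]
  calc _ ≤ ‖w ^ (M + 1) / ↑(M + 1)‖ + ‖w ^ (N + 1) / ↑(N + 1)‖
        + ‖∑ n ∈ Ioc M N, w ^ (n + 1) * ((1 / n - 1 / (n + 1) : ℝ) : ℂ)‖ :=
        norm_sub_le_of_le (norm_sub_le _ _) le_rfl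
    _ ≤ 1 / ↑(M + 1) + 1 / ↑(N + 1) + ∑ n ∈ Ioc M N, (1 / n - 1 / (n + 1) : ℝ) := by
        gcongr
        · exact norm_pow_div_natCast_le hw _ _
        · exact norm_pow_div_natCast_le hw _ _
        · exact (norm_sum_le _ _).trans (sum_le_sum hterm)
    _ = 2 / (M + 1) := by
        rw [sum_Ioc_one_div_sub_one_div hMN]
        push_cast
        ring

theorem norm_sum_Ioc_pow_div_le (hw : ‖w‖ ≤ 1) (hw1 : w ≠ 1) (M N : ℕ) :
    ‖∑ n ∈ Ioc M N, w ^ n / n‖ ≤ 2 / ((M + 1) * ‖1 - w‖) := by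
  have h : 0 < ‖1 - w‖ := norm_pos_iff.2 (sub_ne_zero.2 hw1.symm)
  rw [← div_div, le_div_iff₀ h, mul_comm, ← norm_mul]
  exact norm_one_sub_mul_sum_Ioc_pow_div_le hw M N

end Abel

def logPartialSum (N : ℕ) (z : ℂ) : ℂ := ∑ n ∈ Icc 1 N, z ^ n / n

section LogPartialSum

variable {z : ℂ}

theorem logPartialSum_sub_logPartialSum {M N : ℕ} (h : M ≤ N) (z : ℂ) :
    logPartialSum N z - logPartialSum M z = ∑ n ∈ Ioc M N, z ^ n / n := by
  have hIoc : ∀ K : ℕ, Icc 1 K = Ioc 0 K := Icc_add_one_left_eq_Ioc 0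
  rw [sub_eq_iff_eq_add', logPartialSum, logPartialSum, hIoc, hIoc,
    sum_Ioc_consecutive _ M.zero_le h]

theorem norm_logPartialSum_le_harmonic (hz : ‖z‖ ≤ 1) (N : ℕ) :
    ‖logPartialSum N z‖ ≤ harmonic N := by
  rw [logPartialSum, harmonic_eq_sum_Icc]
  push_cast
  exact (norm_sum_le _ _).trans <| sum_le_sum fun n _ =>
    (norm_pow_div_natCast_le hz n n).trans_eq (one_div _)

theorem norm_logPartialSum_le_harmonic_add (hz : ‖z‖ ≤ 1) (hz1 : z ≠ 1) (M N : ℕ) :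
    ‖logPartialSum N z‖ ≤ harmonic M + 2 / ((M + 1) * ‖1 - z‖) := by
  have htail : 0 ≤ 2 / ((M + 1) * ‖1 - z‖) := by positivity
  rcases le_total N M with hNM | hMN
  · calc ‖logPartialSum N z‖ ≤ harmonic N := norm_logPartialSum_le_harmonic hz N
      _ ≤ harmonic M := by exact_mod_cast harmonic_mono hNM
      _ ≤ _ := le_add_of_nonneg_right htail
  · rw [← sub_add_cancel (logPartialSum N z) (logPartialSum M z),
      logPartialSum_sub_logPartialSum hMN, add_comm]
    exact (norm_add_le _ _).trans (add_le_add (norm_logPartialSum_le_harmonic hz M)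
      (norm_sum_Ioc_pow_div_le hz hz1 M N))

theorem tendsto_logPartialSum (hz : ‖z‖ < 1) :
    Tendsto (fun N => logPartialSum N z) atTop (𝓝 (-log (1 - z))) := by
  refine (hasSum_taylorSeries_neg_log' hz).tendsto_sum_nat.congr fun N => ?_
  rw [logPartialSum, ← Ico_add_one_right_eq_Icc, sum_Ico_eq_sum_range]
  simp [add_comm]

theorem norm_log_one_sub_add_logPartialSum_le_of_norm_lt_one (hz : ‖z‖ < 1) (N : ℕ) :
    ‖log (1 - z) + logPartialSum N z‖ ≤ 2 / ((N + 1) * ‖1 - z‖) := by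
  have hz1 : z ≠ 1 := by rintro rfl; simp at hz
  rw [← norm_neg, neg_add']
  refine le_of_tendsto ((tendsto_logPartialSum hz).sub_const _).norm ?_
  filter_upwards [eventually_ge_atTop N] with M hM
  rw [logPartialSum_sub_logPartialSum hM]
  exact norm_sum_Ioc_pow_div_le hz.le hz1 N M

theorem one_sub_mem_slitPlane (hz : ‖z‖ ≤ 1) (hz1 : z ≠ 1) : 1 - z ∈ slitPlane := by
  refine mem_slitPlane_iff.2 (Or.inl ?_)
  suffices z.re < 1 by simpa using this
  refine ((re_le_norm z).trans hz).lt_of_ne fun hre => hz1 ?_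
  have him : z.im = 0 :=
    abs_re_eq_norm.1 (le_antisymm (abs_re_le_norm z) (by rw [hre, abs_one]; exact hz))
  exact Complex.ext (by simp [hre]) (by simp [him])

theorem norm_log_one_sub_add_logPartialSum_le (hz : ‖z‖ ≤ 1) (hz1 : z ≠ 1) (N : ℕ) :
    ‖log (1 - z) + logPartialSum N z‖ ≤ 2 / ((N + 1) * ‖1 - z‖) := by
  have hne : ‖1 - z‖ ≠ 0 := norm_ne_zero_iff.2 (sub_ne_zero.2 hz1.symm)
  have hcont : ContinuousAt (fun w => ‖log (1 - w) + logPartialSum N w‖) z := by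
    have hlog := (continuousAt_const.sub continuousAt_id).clog (one_sub_mem_slitPlane hz hz1)
    unfold logPartialSum
    fun_prop
  have hbound : ContinuousAt (fun w => 2 / ((N + 1) * ‖1 - w‖)) z := by
    refine continuousAt_const.div (by fun_prop) ?_
    positivity
  have hradial : Tendsto (fun r : ℝ => (r : ℂ) * z) (𝓝[<] 1) (𝓝 z) := by
    have : Continuous fun r : ℝ => (r : ℂ) * z := by fun_prop
    simpa using (this.tendsto (1 : ℝ)).mono_left nhdsWithin_le_nhds
  refine le_of_tendsto_of_tendsto (hcont.tendsto.comp hradial) (hbound.tendsto.comp hradial) ?_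
  filter_upwards [Ioo_mem_nhdsLT zero_lt_one] with r hr
  refine norm_log_one_sub_add_logPartialSum_le_of_norm_lt_one ?_ N
  rw [norm_mul, norm_real, Real.norm_of_nonneg hr.1.le]
  exact mul_lt_one_of_nonneg_of_lt_one_left hr.1.le hr.2 hz

theorem one_half_le_norm_log_one_sub (hz : 1 ≤ ‖z‖) (hz1 : z ≠ 1) : 1 / 2 ≤ ‖log (1 - z)‖ := by
  by_contra! h
  have h' := norm_exp_sub_one_le (x := log (1 - z)) (by linarith)
  rw [exp_log (sub_ne_zero.2 hz1.symm), sub_sub_cancel_left, norm_neg] at h'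
  linarith

theorem neg_log_norm_le_norm_log (w : ℂ) : -Real.log ‖w‖ ≤ ‖log w‖ := by
  rw [← log_re]
  exact (neg_le_abs _).trans (abs_re_le_norm _)

end LogPartialSum

section Estimates

variable {z : ℂ} {s : ℝ}

theorem norm_logPartialSum_le_log (hz : ‖z‖ ≤ 1) (hs : 0 < s) (hs2 : s ≤ 1 / 2)
    (h4 : 4 * s ≤ ‖1 - z‖) (N : ℕ) :
    ‖logPartialSum N z‖ ≤ 5 / 2 * Real.log (1 + s⁻¹) := by
  have hz1 : z ≠ 1 := by rintro rfl; simp at h4; linarith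
  have hs1 : 2 ≤ s⁻¹ := by rw [le_inv_comm₀ two_pos hs]; linarith
  have hM : s⁻¹ < ⌊s⁻¹⌋₊ + 1 := Nat.lt_floor_add_one s⁻¹
  have h1z : 0 < ‖1 - z‖ := by linarith
  have htail : 2 / ((⌊s⁻¹⌋₊ + 1) * ‖1 - z‖) ≤ 1 / 2 := by
    rw [div_le_div_iff₀ (by positivity) two_pos]
    calc 2 * 2 = s⁻¹ * (4 * s) := by field_simp; norm_num
      _ ≤ (⌊s⁻¹⌋₊ + 1) * ‖1 - z‖ := by gcongr
      _ = _ := by ring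
  have hlog : Real.log s⁻¹ ≤ Real.log (1 + s⁻¹) :=
    Real.log_le_log (by positivity) (by linarith)
  have hlog1 : 1 ≤ Real.log (1 + s⁻¹) := one_le_log_of_three_le (by linarith)
  calc ‖logPartialSum N z‖ ≤ harmonic ⌊s⁻¹⌋₊ + 2 / ((⌊s⁻¹⌋₊ + 1) * ‖1 - z‖) :=
        norm_logPartialSum_le_harmonic_add hz hz1 _ N
    _ ≤ (1 + Real.log s⁻¹) + 1 / 2 :=
        add_le_add (harmonic_floor_le_one_add_log _ (by linarith)) htail
    _ ≤ 5 / 2 * Real.log (1 + s⁻¹) := by linarith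

theorem log_le_norm_logPartialSum (hz : ‖z‖ = 1) (hs : 0 < s) (hs2 : s ≤ 1 / 2)
    (h4 : 4 * s ≤ ‖1 - z‖) (h8 : ‖1 - z‖ ≤ 8 * s) {N : ℕ} (hN : 2 ≤ N * s) :
    1 / 20 * Real.log (1 + s⁻¹) ≤ ‖logPartialSum N z‖ := by
  have hz1 : z ≠ 1 := by rintro rfl; simp at h4; linarith
  have htail : ‖log (1 - z) + logPartialSum N z‖ ≤ 1 / 4 := by
    have h1z : 0 < ‖1 - z‖ := by linarith
    refine (norm_log_one_sub_add_logPartialSum_le hz.le hz1 N).trans ?_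
    rw [div_le_div_iff₀ (by positivity) (by norm_num)]
    nlinarith
  have hhalf := one_half_le_norm_log_one_sub hz.ge hz1
  have hlog : -Real.log (8 * s) ≤ ‖log (1 - z)‖ :=
    (neg_le_neg (Real.log_le_log (by linarith) h8)).trans (neg_log_norm_le_norm_log _)
  have hlog8 : Real.log (8 * s) = 3 * Real.log 2 + Real.log s := by
    rw [Real.log_mul (by norm_num) hs.ne', show (8 : ℝ) = 2 ^ 3 by norm_num, Real.log_pow]
    push_cast
    ring
  have hlog1 : Real.log (1 + s⁻¹) ≤ Real.log 2 - Real.log s := by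
    rw [← Real.log_div two_ne_zero hs.ne']
    have hs1 : 2 ≤ s⁻¹ := by rw [le_inv_comm₀ two_pos hs]; linarith
    exact Real.log_le_log (by positivity) (by rw [div_eq_mul_inv]; linarith)
  have hnorm : ‖log (1 - z)‖ ≤ ‖log (1 - z) + logPartialSum N z‖ + ‖logPartialSum N z‖ := by
    simpa using norm_sub_le (log (1 - z) + logPartialSum N z) (logPartialSum N z)
  have hlog2 := Real.log_two_lt_d9
  rcases le_total (-Real.log s) 4 with hsmall | hlarge <;> linarith

end Estimates

theorem logKern_eq (N : ℕ) (t : ℝ) :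
    logKern N t = ((harmonic N : ℝ) : ℂ)⁻¹ * logPartialSum N (cexp (2 * π * I * t)) := by
  have hH : ∑ n ∈ Icc 1 N, (1 : ℝ) / n = harmonic N := by simp [harmonic_eq_sum_Icc]
  rw [logKern, hH, logPartialSum]
  congr 1
  refine sum_congr rfl fun n _ => ?_
  rw [← exp_nat_mul]
  ring_nf

theorem norm_logKern (N : ℕ) (t : ℝ) :
    ‖logKern N t‖ = ‖logPartialSum N (cexp (2 * π * I * t))‖ / harmonic N := by
  rw [logKern_eq, norm_mul, norm_inv, norm_real, Real.norm_of_nonneg (harmonic_cast_nonneg N),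
    inv_mul_eq_div]

theorem exp_two_pi_I_mul_eq_exp_I_mul_sub_round (t : ℝ) :
    cexp (2 * π * I * t) = cexp (I * ↑(2 * π * (t - round t))) := by
  have : 2 * π * I * t = I * ↑(2 * π * (t - round t)) + round t * (2 * π * I) := by
    push_cast
    ring
  rw [this, exp_add, exp_int_mul_two_pi_mul_I, mul_one]

theorem norm_exp_two_pi_I_mul (t : ℝ) : ‖cexp (2 * π * I * t)‖ = 1 := by
  rw [exp_two_pi_I_mul_eq_exp_I_mul_sub_round, norm_exp_I_mul_ofReal]

theorem norm_one_sub_exp_two_pi_I_mul_le (t : ℝ) : ‖1 - cexp (2 * π * I * t)‖ ≤ 8 * dnint t := by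
  rw [norm_sub_rev, exp_two_pi_I_mul_eq_exp_I_mul_sub_round]
  refine Real.norm_exp_I_mul_ofReal_sub_one_le.trans ?_
  rw [Real.norm_eq_abs, abs_mul, abs_of_pos Real.two_pi_pos, dnint]
  gcongr
  linarith [Real.pi_lt_four]

theorem four_mul_dnint_le_norm_one_sub_exp_two_pi_I_mul (t : ℝ) :
    4 * dnint t ≤ ‖1 - cexp (2 * π * I * t)‖ := by
  have hu : |π * (t - round t)| ≤ π / 2 := by
    rw [abs_mul, abs_of_pos Real.pi_pos]
    nlinarith [abs_sub_round t, Real.pi_pos]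
  have hjordan := Real.mul_le_sin (abs_nonneg _) hu
  rw [← Real.abs_sin_eq_sin_abs_of_abs_le_pi (by linarith [Real.pi_pos]), abs_mul,
    abs_of_pos Real.pi_pos, ← mul_assoc, div_mul_cancel₀ _ Real.pi_pos.ne'] at hjordan
  rw [norm_sub_rev, exp_two_pi_I_mul_eq_exp_I_mul_sub_round, norm_exp_I_mul_ofReal_sub_one,
    norm_mul, Real.norm_eq_abs, Real.norm_eq_abs, abs_two, dnint,
    show 2 * π * (t - round t) / 2 = π * (t - round t) by ring]
  linarith

theorem norm_logKern_le_one (N : ℕ) (t : ℝ) : ‖logKern N t‖ ≤ 1 := by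
  rw [norm_logKern]
  exact div_le_one_of_le₀ (norm_logPartialSum_le_harmonic (norm_exp_two_pi_I_mul t).le N)
    (harmonic_cast_nonneg N)

theorem norm_logKern_le {N : ℕ} (hN : 1 ≤ N) {t : ℝ} (ht : dnint t ≠ 0) :
    ‖logKern N t‖ ≤ 5 / 2 * Real.log (1 + (dnint t)⁻¹) / Real.log (1 + N) := by
  have hs : 0 < dnint t := (abs_nonneg _).lt_of_ne' ht
  have hN' : (1 : ℝ) ≤ N := by exact_mod_cast hN
  have hH : Real.log (1 + N) ≤ harmonic N := by
    simpa [add_comm] using log_add_one_le_harmonic N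
  have hlog : 0 ≤ Real.log (1 + (dnint t)⁻¹) := Real.log_nonneg (by simp [hs.le])
  rw [norm_logKern]
  exact div_le_div₀ (by positivity)
    (norm_logPartialSum_le_log (norm_exp_two_pi_I_mul t).le hs (abs_sub_round t)
      (four_mul_dnint_le_norm_one_sub_exp_two_pi_I_mul t) N)
    (Real.log_pos (by linarith)) hH

theorem le_norm_logKern {N : ℕ} (hN : 1 ≤ N) {t : ℝ} (ht : 2 / N ≤ dnint t) :
    1 / 40 * Real.log (1 + (dnint t)⁻¹) / Real.log (1 + N) ≤ ‖logKern N t‖ := by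
  have hN' : (1 : ℝ) ≤ N := by exact_mod_cast hN
  have hs : 0 < dnint t := lt_of_lt_of_le (by positivity) ht
  have hNs : 2 ≤ N * dnint t := by rwa [div_le_iff₀' (by positivity)] at ht
  have hs2 : dnint t ≤ 1 / 2 := abs_sub_round t
  have hN3 : (3 : ℝ) ≤ 1 + N := by nlinarith
  have hH : (harmonic N : ℝ) ≤ 2 * Real.log (1 + N) := by
    have := Real.log_le_log (by linarith) (show (N : ℝ) ≤ 1 + N by linarith)
    linarith [harmonic_le_one_add_log N, one_le_log_of_three_le hN3]
  have hH0 : (0 : ℝ) < harmonic N := by exact_mod_cast harmonic_pos (by omega)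
  rw [norm_logKern]
  calc 1 / 40 * Real.log (1 + (dnint t)⁻¹) / Real.log (1 + N)
      = 1 / 20 * Real.log (1 + (dnint t)⁻¹) / (2 * Real.log (1 + N)) := by ring
    _ ≤ _ := div_le_div₀ (norm_nonneg _)
        (log_le_norm_logPartialSum (norm_exp_two_pi_I_mul t) hs hs2
          (four_mul_dnint_le_norm_one_sub_exp_two_pi_I_mul t)
          (norm_one_sub_exp_two_pi_I_mul_le t) hNs) hH0 hH

/-- Lemma 4.3: two-sided estimate of the logarithmic kernel.  The upper bound
`min{1, c log(1+‖t‖^{-1})/log(1+N)}` holds for every `t` (with the convention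
`‖t‖^{-1} = ∞` when `‖t‖ = 0`, expressed by the two clauses below) and the reverse
inequality holds for large `N` and `‖t‖ ≥ c''/N`. -/
theorem stmt_16 :
    (∃ c : ℝ, 0 < c ∧ ∀ N : ℕ, 1 ≤ N → ∀ t : ℝ,
      ‖logKern N t‖ ≤ 1 ∧
      (dnint t ≠ 0 →
        ‖logKern N t‖ ≤ c * Real.log (1 + (dnint t)⁻¹) / Real.log (1 + N)))
    ∧
    (∃ c' : ℝ, 0 < c' ∧ ∃ c'' : ℝ, 0 < c'' ∧ ∃ N₀ : ℕ,
      ∀ N : ℕ, N₀ ≤ N → ∀ t : ℝ, c'' / N ≤ dnint t →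
        c' * Real.log (1 + (dnint t)⁻¹) / Real.log (1 + N) ≤ ‖logKern N t‖) := by
  refine ⟨⟨5 / 2, by norm_num, fun N hN t => ⟨norm_logKern_le_one N t, norm_logKern_le hN⟩⟩,
    ⟨1 / 40, by norm_num, 2, two_pos, 1, fun N hN t ht => le_norm_logKern hN ht⟩⟩
end
end

section
/- Consider the logarithmic weights Φ(N,n) = (∑_{m=1}^{N} 1/m)^{−1} (1/n) for 1 ≤ n ≤ N and Φ(N,n) = 0 otherwise. If α ∈ ℝ^d is not a Liouville vector, i.e. there exist constants H > 0 and σ > 0 such that ‖α·m‖ ≥ H|m|^{−σ} for every m ∈ ℤ^d \ {0}, then there exists a constant c = c(d,H,σ) > 0 such that for every function f on 𝕋^d with ∑_{m∈ℤ^d} |f̂(m)| log(1+|m|) < ∞ and every positive integer N, sup_{x∈𝕋^d} |(∑_{n=1}^{N} 1/n)^{−1} ∑_{n=1}^{N} f(x+nα)/n − ∫_{𝕋^d} f(y) dy| ≤ c log^{−1}(1+N) ∑_{m∈ℤ^d} |f̂(m)| log(1+|m|). -/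
/-!
Expanding `f` in its absolutely convergent Fourier series, the logarithmic discrepancy becomes
`(∑_{n ≤ N} 1/n)⁻¹ ∑_{m ≠ 0} a_m e(m·x) K_N(m·α)` with `K_N(t) = ∑_{n ≤ N} e(nt)/n`.
The partial sums of `e(nt)` are at most `1/(2‖t‖)`, so by Abel summation the part of `K_N(t)`
with `n > 1/(2‖t‖)` is at most `1`, while the rest is a harmonic sum of length `≈ 1/(2‖t‖)`:
`|K_N(t)| ≤ 2 + log (1 + 1/(2‖t‖))`. The Diophantine condition turns this into
`O(log (1 + |m|))` at `t = m·α`, and `∑_{n ≤ N} 1/n ≥ log (1 + N)`.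
-/

open MeasureTheory Filter Finset
open scoped Real ENNReal Topology BigOperators

noncomputable section

/-- The logarithmic discrepancy
`(∑_{n=1}^N 1/n)^{-1} ∑_{n=1}^N f(x+nα)/n − ∫_{𝕋^d} f`. -/
def logDisc {d : ℕ} (α : Fin d → ℝ) (f : (Fin d → ℝ) → ℂ) (N : ℕ) (x : Fin d → ℝ) : ℂ :=
  (((∑ n ∈ Finset.Icc 1 N, (1 : ℝ) / n) : ℝ) : ℂ)⁻¹ *
      (∑ n ∈ Finset.Icc 1 N, f (x + (n : ℤ) • α) / (n : ℂ))
    - ∫ y in cube d, f y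

def expTwoPiI (t : ℝ) : ℂ := Complex.exp (2 * π * Complex.I * t)

lemma expTwoPiI_eq_exp_ofReal_mul_I (t : ℝ) :
    expTwoPiI t = Complex.exp ((2 * π * t : ℝ) * Complex.I) := by
  rw [expTwoPiI]; push_cast; ring_nf

@[simp] lemma norm_expTwoPiI (t : ℝ) : ‖expTwoPiI t‖ = 1 := by
  rw [expTwoPiI_eq_exp_ofReal_mul_I, Complex.norm_exp_ofReal_mul_I]

@[simp] lemma expTwoPiI_zero : expTwoPiI 0 = 1 := by simp [expTwoPiI]

lemma expTwoPiI_add (s t : ℝ) : expTwoPiI (s + t) = expTwoPiI s * expTwoPiI t := by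
  simp only [expTwoPiI, ← Complex.exp_add]; push_cast; ring_nf

lemma expTwoPiI_natCast_mul (n : ℕ) (t : ℝ) : expTwoPiI (n * t) = expTwoPiI t ^ n := by
  simp only [expTwoPiI, ← Complex.exp_nat_mul]; push_cast; ring_nf

lemma continuous_expTwoPiI : Continuous expTwoPiI := by
  unfold expTwoPiI; fun_prop

lemma four_mul_dnint_le_norm_expTwoPiI_sub_one (t : ℝ) :
    4 * dnint t ≤ ‖expTwoPiI t - 1‖ := by
  set r := t - round t
  have hchord : ‖expTwoPiI t - 1‖ = 2 * |Real.sin (π * t)| := by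
    rw [expTwoPiI_eq_exp_ofReal_mul_I, mul_comm _ Complex.I,
      Complex.norm_exp_I_mul_ofReal_sub_one, norm_mul, Real.norm_two, Real.norm_eq_abs]
    ring_nf
  have hperiodic : |Real.sin (π * t)| = |Real.sin (π * r)| := by
    rw [show π * t = π * r + (round t : ℤ) * π by simp only [r]; ring, Real.sin_add_int_mul_pi,
      abs_mul, abs_neg_one_zpow, one_mul]
  have hjordan : 2 / π * |π * r| ≤ |Real.sin (π * r)| := by
    refine Real.mul_abs_le_abs_sin ?_
    rw [abs_mul, abs_of_pos Real.pi_pos]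
    nlinarith [abs_sub_round t, Real.pi_pos]
  rw [abs_mul, abs_of_pos Real.pi_pos, ← mul_assoc, div_mul_cancel₀ _ Real.pi_ne_zero]
    at hjordan
  rw [hchord, hperiodic, dnint]
  linarith

lemma norm_geom_sum_Ioc_mul_norm_sub_one_le {R : Type*} [NormedDivisionRing R] {z : R}
    (hz : ‖z‖ = 1) (M j : ℕ) :
    ‖∑ n ∈ Ioc M j, z ^ n‖ * ‖z - 1‖ ≤ 2 := by
  rcases le_or_gt j M with hjM | hMj
  · simp [Ioc_eq_empty_of_le hjM]
  rw [← norm_mul, ← Finset.Ico_add_one_add_one_eq_Ioc, geom_sum_Ico_mul _ (by omega)]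
  calc ‖z ^ (j + 1) - z ^ (M + 1)‖ ≤ ‖z ^ (j + 1)‖ + ‖z ^ (M + 1)‖ := norm_sub_le _ _
    _ = 2 := by simp [hz]; norm_num

lemma norm_sum_Ioc_expTwoPiI_le {t : ℝ} (ht : 0 < dnint t) (M j : ℕ) :
    ‖∑ n ∈ Ioc M j, expTwoPiI (n * t)‖ ≤ (2 * dnint t)⁻¹ := by
  have hgeom := norm_geom_sum_Ioc_mul_norm_sub_one_le (norm_expTwoPiI t) M j
  have hchord := four_mul_dnint_le_norm_expTwoPiI_sub_one t
  simp only [expTwoPiI_natCast_mul]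
  rw [← one_div, le_div_iff₀ (by positivity)]
  nlinarith [norm_nonneg (∑ n ∈ Ioc M j, expTwoPiI t ^ n)]

lemma norm_sum_Ioc_smul_le_of_antitone {E : Type*} [NormedAddCommGroup E] [NormedSpace ℝ E]
    {z : ℕ → E} {w : ℕ → ℝ} {B : ℝ} {M : ℕ} (hz : ∀ n, ‖∑ k ∈ Ioc M n, z k‖ ≤ B)
    (hw : ∀ n, M < n → w (n + 1) ≤ w n) (hw0 : ∀ n, 0 ≤ w n) (N : ℕ) :
    ‖∑ n ∈ Ioc M N, w n • z n‖ ≤ B * w (M + 1) := by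
  have hB : 0 ≤ B := (norm_nonneg _).trans (hz M)
  rcases lt_or_ge N M with hNM | hMN
  · simp only [Ioc_eq_empty_of_le hNM.le, sum_empty, norm_zero]
    exact mul_nonneg hB (hw0 _)
  -- Abel summation, in a form whose error term telescopes along the induction
  have abel : ∀ n, M ≤ n →
      ‖∑ k ∈ Ioc M n, w k • z k - w (n + 1) • ∑ k ∈ Ioc M n, z k‖
        ≤ B * (w (M + 1) - w (n + 1)) := by
    intro n hn
    induction n, hn using Nat.le_induction with
    | base => simp
    | succ n hMn ih =>
      rw [sum_Ioc_succ_top hMn, sum_Ioc_succ_top hMn]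
      have hsplit : ∑ k ∈ Ioc M n, w k • z k + w (n + 1) • z (n + 1)
            - w (n + 1 + 1) • (∑ k ∈ Ioc M n, z k + z (n + 1))
          = (∑ k ∈ Ioc M n, w k • z k - w (n + 1) • ∑ k ∈ Ioc M n, z k)
            + (w (n + 1) - w (n + 1 + 1)) • ∑ k ∈ Ioc M (n + 1), z k := by
        rw [sum_Ioc_succ_top hMn]; module
      have hdecr : 0 ≤ w (n + 1) - w (n + 1 + 1) := sub_nonneg.2 (hw _ (by omega))
      rw [hsplit]
      calc _ ≤ B * (w (M + 1) - w (n + 1)) + (w (n + 1) - w (n + 1 + 1)) * B := by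
            refine (norm_add_le _ _).trans (add_le_add ih ?_)
            rw [norm_smul, Real.norm_of_nonneg hdecr]
            exact mul_le_mul_of_nonneg_left (hz _) hdecr
        _ = B * (w (M + 1) - w (n + 1 + 1)) := by ring
  calc ‖∑ n ∈ Ioc M N, w n • z n‖
      ≤ ‖∑ k ∈ Ioc M N, w k • z k - w (N + 1) • ∑ k ∈ Ioc M N, z k‖
        + ‖w (N + 1) • ∑ k ∈ Ioc M N, z k‖ := norm_le_norm_sub_add _ _
    _ ≤ B * (w (M + 1) - w (N + 1)) + w (N + 1) * B := by
        refine add_le_add (abel N hMN) ?_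
        rw [norm_smul, Real.norm_of_nonneg (hw0 _)]
        exact mul_le_mul_of_nonneg_left (hz N) (hw0 _)
    _ = B * w (M + 1) := by ring

lemma norm_sum_Ioc_expTwoPiI_div_le {t : ℝ} (ht : 0 < dnint t) (M N : ℕ) :
    ‖∑ n ∈ Ioc M N, expTwoPiI (n * t) / n‖ ≤ (2 * dnint t)⁻¹ / (M + 1) := by
  have hsmul : ∀ n : ℕ, expTwoPiI (n * t) / n = (n : ℝ)⁻¹ • expTwoPiI (n * t) := by
    intro n; rw [Complex.real_smul, div_eq_inv_mul]; push_cast; rfl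
  simp only [hsmul]
  refine (norm_sum_Ioc_smul_le_of_antitone (norm_sum_Ioc_expTwoPiI_le ht M) ?_
    (fun n => inv_nonneg.2 n.cast_nonneg) N).trans_eq ?_
  · intro n hn
    exact inv_anti₀ (by exact_mod_cast hn.trans_le' (Nat.zero_le M)) (by push_cast; linarith)
  · push_cast; rw [div_eq_mul_inv]

lemma norm_sum_Ioc_zero_expTwoPiI_div_le (t : ℝ) (M : ℕ) :
    ‖∑ n ∈ Ioc 0 M, expTwoPiI (n * t) / n‖ ≤ 1 + Real.log M := by
  calc ‖∑ n ∈ Ioc 0 M, expTwoPiI (n * t) / n‖ ≤ ∑ n ∈ Icc 1 M, (n : ℝ)⁻¹ := by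
        refine (norm_sum_le _ _).trans (sum_le_sum fun n _ => ?_)
        simp
    _ = harmonic M := by rw [harmonic_eq_sum_Icc]; push_cast; rfl
    _ ≤ 1 + Real.log M := harmonic_le_one_add_log M

def logKernel (N : ℕ) (t : ℝ) : ℂ := ∑ n ∈ Icc 1 N, expTwoPiI (n * t) / n

lemma sum_Icc_one_div_eq_harmonic (N : ℕ) : ∑ n ∈ Icc 1 N, (1 : ℝ) / n = harmonic N := by
  simp [harmonic_eq_sum_Icc]

lemma logKernel_zero (N : ℕ) : logKernel N 0 = ((harmonic N : ℝ) : ℂ) := by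
  simp [logKernel, harmonic_eq_sum_Icc, one_div]

lemma norm_logKernel_le_harmonic (N : ℕ) (t : ℝ) : ‖logKernel N t‖ ≤ harmonic N := by
  rw [← sum_Icc_one_div_eq_harmonic]
  exact (norm_sum_le _ _).trans (sum_le_sum fun n _ => by simp)

lemma norm_logKernel_le (N : ℕ) {t : ℝ} (ht : 0 < dnint t) :
    ‖logKernel N t‖ ≤ 2 + Real.log (1 + (2 * dnint t)⁻¹) := by
  set B := (2 * dnint t)⁻¹
  have hB : 0 ≤ B := by positivity
  -- up to `⌈B⌉` use the harmonic bound; beyond it Abel summation gives `B / (⌈B⌉ + 1) ≤ 1`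
  set M := min N ⌈B⌉₊
  have hsplit : logKernel N t
      = ∑ n ∈ Ioc 0 M, expTwoPiI (n * t) / n + ∑ n ∈ Ioc M N, expTwoPiI (n * t) / n :=
    (sum_Ioc_consecutive _ (Nat.zero_le M) (min_le_left _ _)).symm
  have hhead : ‖∑ n ∈ Ioc 0 M, expTwoPiI (n * t) / n‖ ≤ 1 + Real.log (1 + B) := by
    refine (norm_sum_Ioc_zero_expTwoPiI_div_le t M).trans ?_
    gcongr 1 + ?_
    rcases Nat.eq_zero_or_pos M with hM | hM
    · rw [hM, Nat.cast_zero, Real.log_zero]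
      exact Real.log_nonneg (by linarith)
    · refine Real.log_le_log (by exact_mod_cast hM) ?_
      have : (M : ℝ) ≤ ⌈B⌉₊ := by exact_mod_cast min_le_right N ⌈B⌉₊
      linarith [Nat.ceil_lt_add_one hB]
  have htail : ‖∑ n ∈ Ioc M N, expTwoPiI (n * t) / n‖ ≤ 1 := by
    rcases le_total N ⌈B⌉₊ with hN | hN
    · simp [M, min_eq_left hN]
    · refine (norm_sum_Ioc_expTwoPiI_div_le ht M N).trans ?_
      rw [div_le_one (by positivity), show M = ⌈B⌉₊ from min_eq_right hN]
      linarith [Nat.le_ceil B]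
  rw [hsplit]
  linarith [norm_add_le (∑ n ∈ Ioc 0 M, expTwoPiI (n * t) / n)
    (∑ n ∈ Ioc M N, expTwoPiI (n * t) / n)]

def logKernelConst (H σ : ℝ) : ℝ := (2 + Real.log (1 + (2 * H)⁻¹)) / Real.log 2 + σ

lemma logKernelConst_pos {H σ : ℝ} (hH : 0 ≤ H) (hσ : 0 ≤ σ) : 0 < logKernelConst H σ := by
  have : 0 ≤ Real.log (1 + (2 * H)⁻¹) := Real.log_nonneg (le_add_of_nonneg_right (by positivity))
  unfold logKernelConst
  have := Real.log_pos one_lt_two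
  positivity

lemma two_add_log_le_logKernelConst_mul {H σ z δ : ℝ} (hH : 0 < H) (hσ : 0 ≤ σ) (hz : 1 ≤ z)
    (hδ : H * z ^ (-σ) ≤ δ) :
    2 + Real.log (1 + (2 * δ)⁻¹) ≤ logKernelConst H σ * Real.log (1 + z) := by
  have hz0 : 0 < z := by linarith
  have hzσ : 0 < z ^ σ := Real.rpow_pos_of_pos hz0 σ
  have hδ0 : 0 < δ := lt_of_lt_of_le (by positivity) hδ
  set A := 2 + Real.log (1 + (2 * H)⁻¹)
  have hA : 0 ≤ A := by
    have : 0 ≤ Real.log (1 + (2 * H)⁻¹) := Real.log_nonneg (le_add_of_nonneg_right (by positivity))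
    positivity
  have hinv : (2 * δ)⁻¹ ≤ (2 * H)⁻¹ * z ^ σ := by
    rw [Real.rpow_neg hz0.le] at hδ
    calc (2 * δ)⁻¹ ≤ (2 * (H * (z ^ σ)⁻¹))⁻¹ := by gcongr
      _ = (2 * H)⁻¹ * z ^ σ := by field_simp
  have hpow : 1 + (2 * δ)⁻¹ ≤ (1 + (2 * H)⁻¹) * (1 + z) ^ σ := by
    have h1 : 1 ≤ (1 + z) ^ σ := Real.one_le_rpow (by linarith) hσ
    have h2 : z ^ σ ≤ (1 + z) ^ σ := Real.rpow_le_rpow hz0.le (by linarith) hσ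
    have h3 : (2 * H)⁻¹ * z ^ σ ≤ (2 * H)⁻¹ * (1 + z) ^ σ := by gcongr
    nlinarith
  have hlog : Real.log (1 + (2 * δ)⁻¹) ≤ Real.log (1 + (2 * H)⁻¹) + σ * Real.log (1 + z) := by
    calc Real.log (1 + (2 * δ)⁻¹) ≤ Real.log ((1 + (2 * H)⁻¹) * (1 + z) ^ σ) :=
          Real.log_le_log (by positivity) hpow
      _ = _ := by rw [Real.log_mul (by positivity) (by positivity), Real.log_rpow (by linarith)]
  have hlog2 : A ≤ A / Real.log 2 * Real.log (1 + z) := by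
    rw [div_mul_eq_mul_div, le_div_iff₀ (Real.log_pos one_lt_two)]
    exact mul_le_mul_of_nonneg_left (Real.log_le_log two_pos (by linarith)) hA
  rw [logKernelConst]
  linarith

def zdot {d : ℕ} (m : Fin d → ℤ) (x : Fin d → ℝ) : ℝ := ∑ i, (m i : ℝ) * x i

@[simp] lemma zdot_zero_left {d : ℕ} (x : Fin d → ℝ) : zdot 0 x = 0 := by simp [zdot]

lemma zdot_add_zsmul {d : ℕ} (m : Fin d → ℤ) (x α : Fin d → ℝ) (k : ℤ) :
    zdot m (x + k • α) = zdot m x + k * zdot m α := by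
  simp only [zdot, Pi.add_apply, zsmul_eq_mul, Pi.mul_apply, Pi.intCast_apply, mul_sum,
    ← sum_add_distrib]
  exact sum_congr rfl fun i _ => by ring

lemma expTwoPiI_sum {ι : Type*} (s : Finset ι) (g : ι → ℝ) :
    expTwoPiI (∑ i ∈ s, g i) = ∏ i ∈ s, expTwoPiI (g i) := by
  simp only [expTwoPiI, ← Complex.exp_sum]; push_cast; rw [mul_sum]

lemma integral_Icc_expTwoPiI_intCast_mul (k : ℤ) :
    ∫ t in Set.Icc (0 : ℝ) 1, expTwoPiI (k * t) = if k = 0 then 1 else 0 := by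
  rw [integral_Icc_eq_integral_Ioc, ← intervalIntegral.integral_of_le zero_le_one]
  split_ifs with hk
  · simp [hk]
  have hc : 2 * π * Complex.I * k ≠ 0 := by simp [Real.pi_ne_zero, hk]
  have hexp : ∀ t : ℝ, expTwoPiI (k * t) = Complex.exp (2 * π * Complex.I * k * t) := by
    intro t; rw [expTwoPiI]; push_cast; ring_nf
  simp only [hexp, integral_exp_mul_complex hc]
  have hper : Complex.exp (2 * π * Complex.I * k) = 1 := by
    rw [mul_comm]; exact Complex.exp_int_mul_two_pi_mul_I k
  simp [hper]

lemma integral_cube_expTwoPiI_zdot {d : ℕ} (m : Fin d → ℤ) :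
    ∫ x in cube d, expTwoPiI (zdot m x) = if m = 0 then 1 else 0 := by
  rw [cube, ← Set.pi_univ_Icc, volume_pi, Measure.restrict_pi_pi]
  simp only [zdot, expTwoPiI_sum]
  rw [integral_fintype_prod_eq_prod (fun i t => expTwoPiI (m i * t))]
  simp only [Pi.zero_apply, Pi.one_apply, integral_Icc_expTwoPiI_intCast_mul, prod_boole,
    mem_univ, forall_const, funext_iff]

lemma volume_real_cube (d : ℕ) : volume.real (cube d) = 1 := by
  simp [Measure.real, cube, Real.volume_Icc_pi]

section FourierSeries

variable {d : ℕ} {a : (Fin d → ℤ) → ℂ} {f : (Fin d → ℝ) → ℂ}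

lemma integral_cube_eq_coeff_zero (ha : Summable fun m => ‖a m‖)
    (hf : ∀ x, f x = ∑' m, a m * expTwoPiI (zdot m x)) :
    ∫ y in cube d, f y = a 0 := by
  have hint : ∀ m, Integrable (fun y => a m * expTwoPiI (zdot m y)) (volume.restrict (cube d)) :=
    fun m => ((continuous_expTwoPiI.comp (by unfold zdot; fun_prop)).const_mul _
      |>.continuousOn).integrableOn_compact isCompact_Icc
  have hnorm : ∀ m, ∫ y in cube d, ‖a m * expTwoPiI (zdot m y)‖ = ‖a m‖ := by
    intro m; simp [volume_real_cube]
  simp_rw [hf, ← integral_tsum_of_summable_integral_norm hint (by simpa only [hnorm] using ha),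
    integral_const_mul, integral_cube_expTwoPiI_zdot, mul_ite, mul_one, mul_zero]
  exact tsum_ite_eq 0 a

lemma sum_Icc_shift_div_eq_tsum_logKernel (ha : Summable fun m => ‖a m‖)
    (hf : ∀ x, f x = ∑' m, a m * expTwoPiI (zdot m x)) (α x : Fin d → ℝ) (N : ℕ) :
    ∑ n ∈ Icc 1 N, f (x + (n : ℤ) • α) / n
      = ∑' m, a m * expTwoPiI (zdot m x) * logKernel N (zdot m α) := by
  have hterm : ∀ n : ℕ, f (x + (n : ℤ) • α) / n
      = ∑' m, a m * expTwoPiI (zdot m x) * (expTwoPiI (n * zdot m α) / n) := by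
    intro n
    rw [hf, ← tsum_div_const]
    refine tsum_congr fun m => ?_
    rw [zdot_add_zsmul, expTwoPiI_add]
    push_cast
    ring
  have hsum : ∀ n ∈ Icc 1 N,
      Summable fun m => a m * expTwoPiI (zdot m x) * (expTwoPiI (n * zdot m α) / n) := by
    intro n _
    refine Summable.of_norm ((ha.mul_right (n : ℝ)⁻¹).congr fun m => ?_)
    simp
  simp only [sum_congr rfl fun n _ => hterm n, ← Summable.tsum_finsetSum hsum, logKernel, mul_sum]

lemma norm_logDisc_le {α : Fin d → ℝ} {N : ℕ} {g : (Fin d → ℤ) → ℝ} (hN : N ≠ 0)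
    (ha : Summable fun m => ‖a m‖) (hf : ∀ x, f x = ∑' m, a m * expTwoPiI (zdot m x))
    (hK : ∀ m, m ≠ 0 → ‖logKernel N (zdot m α)‖ ≤ g m) (hg0 : ∀ m, 0 ≤ g m)
    (hg : Summable fun m => ‖a m‖ * g m) (x : Fin d → ℝ) :
    ‖logDisc α f N x‖ ≤ (harmonic N : ℝ)⁻¹ * ∑' m, ‖a m‖ * g m := by
  set F := fun m => a m * expTwoPiI (zdot m x) * logKernel N (zdot m α)
  have hnormF : ∀ m, ‖F m‖ = ‖a m‖ * ‖logKernel N (zdot m α)‖ := by simp [F]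
  have hF : Summable F := Summable.of_norm <|
    (ha.mul_right (harmonic N : ℝ)).of_nonneg_of_le (fun _ => norm_nonneg _) fun m => by
      rw [hnormF]; gcongr; exact norm_logKernel_le_harmonic N _
  have hF0 : F 0 = a 0 * ((harmonic N : ℝ) : ℂ) := by simp [F, logKernel_zero]
  have hharm : (0 : ℝ) < harmonic N := by exact_mod_cast harmonic_pos hN
  have hdisc : logDisc α f N x
      = ((harmonic N : ℝ) : ℂ)⁻¹ * ∑' m, if m = 0 then 0 else F m := by
    rw [logDisc, integral_cube_eq_coeff_zero ha hf, sum_Icc_shift_div_eq_tsum_logKernel ha hf,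
      sum_Icc_one_div_eq_harmonic, hF.tsum_eq_add_tsum_ite 0, hF0, mul_add, mul_comm (a 0),
      inv_mul_cancel_left₀ (Complex.ofReal_ne_zero.2 hharm.ne'), add_sub_cancel_left]
  have htail : ‖∑' m, if m = 0 then 0 else F m‖ ≤ ∑' m, ‖a m‖ * g m := by
    refine tsum_of_norm_bounded hg.hasSum fun m => ?_
    split_ifs with hm
    · simpa using mul_nonneg (norm_nonneg (a m)) (hg0 m)
    · rw [hnormF]; gcongr; exact hK m hm
  rw [hdisc, norm_mul, norm_inv, Complex.norm_real, Real.norm_of_nonneg hharm.le]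
  gcongr

end FourierSeries

lemma one_le_znorm {d : ℕ} {m : Fin d → ℤ} (hm : m ≠ 0) : 1 ≤ znorm m := by
  obtain ⟨i, hi⟩ := Function.ne_iff.1 hm
  have hmi : (1 : ℝ) ≤ (m i : ℝ) ^ 2 :=
    one_le_sq_iff_one_le_abs _ |>.2 (by exact_mod_cast Int.one_le_abs hi)
  rw [znorm, Real.one_le_sqrt]
  exact hmi.trans (single_le_sum (f := fun j => (m j : ℝ) ^ 2) (fun j _ => sq_nonneg _)
    (mem_univ i))

lemma norm_logKernel_le_logKernelConst_mul {H σ z t : ℝ} (hH : 0 < H) (hσ : 0 ≤ σ) (hz : 1 ≤ z)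
    (ht : H * z ^ (-σ) ≤ dnint t) (N : ℕ) :
    ‖logKernel N t‖ ≤ logKernelConst H σ * Real.log (1 + z) := by
  have hzσ : 0 < z ^ (-σ) := Real.rpow_pos_of_pos (by linarith) _
  exact (norm_logKernel_le N (lt_of_lt_of_le (by positivity) ht)).trans
    (two_add_log_le_logKernelConst_mul hH hσ hz ht)

theorem stmt_18_general (d : ℕ)
    (α : Fin d → ℝ) (H σ : ℝ) (hH : 0 < H) (hσ : 0 < σ)
    (hdio : ∀ m : Fin d → ℤ, m ≠ 0 →
      H * znorm m ^ (-σ) ≤ dnint (∑ i, (m i : ℝ) * α i)) :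
    ∃ c : ℝ, 0 < c ∧
      ∀ (a : (Fin d → ℤ) → ℂ) (f : (Fin d → ℝ) → ℂ),
        (Summable fun m => ‖a m‖) →
        (Summable fun m => ‖a m‖ * Real.log (1 + znorm m)) →
        (∀ x : Fin d → ℝ,
          f x = ∑' m : Fin d → ℤ,
            a m * Complex.exp (2 * Real.pi * Complex.I * ((∑ i, (m i : ℝ) * x i : ℝ) : ℂ))) →
        ∀ N : ℕ, 1 ≤ N → ∀ x : Fin d → ℝ,
          ‖logDisc α f N x‖
            ≤ c * (Real.log (1 + N))⁻¹ *
                ∑' m : Fin d → ℤ, ‖a m‖ * Real.log (1 + znorm m) := by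
  set c := logKernelConst H σ
  have hc : 0 < c := logKernelConst_pos hH.le hσ.le
  refine ⟨c, hc, fun a f ha hlog hf N hN x => ?_⟩
  have hlog0 : ∀ m : Fin d → ℤ, 0 ≤ Real.log (1 + znorm m) :=
    fun m => Real.log_nonneg (le_add_of_nonneg_right (Real.sqrt_nonneg _))
  have hdisc := norm_logDisc_le (g := fun m => c * Real.log (1 + znorm m)) (α := α)
    (Nat.one_le_iff_ne_zero.1 hN) ha hf
    (fun m hm => norm_logKernel_le_logKernelConst_mul hH hσ.le (one_le_znorm hm) (hdio m hm) N)
    (fun m => mul_nonneg hc.le (hlog0 m)) ((hlog.mul_left c).congr fun m => by ring) x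
  have hharm : Real.log (1 + N) ≤ harmonic N := by
    rw [add_comm]; exact_mod_cast log_add_one_le_harmonic N
  have hlogN : 0 < Real.log (1 + N) := Real.log_pos (by norm_cast; omega)
  calc ‖logDisc α f N x‖
      ≤ (harmonic N : ℝ)⁻¹ * ∑' m, ‖a m‖ * (c * Real.log (1 + znorm m)) := hdisc
    _ = c * (harmonic N : ℝ)⁻¹ * ∑' m, ‖a m‖ * Real.log (1 + znorm m) := by
        simp_rw [mul_left_comm _ c, tsum_mul_left]; ring
    _ ≤ c * (Real.log (1 + N))⁻¹ * ∑' m, ‖a m‖ * Real.log (1 + znorm m) := by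
        gcongr
        exact tsum_nonneg fun m => mul_nonneg (norm_nonneg _) (hlog0 m)

/-- Theorem 4.2: deterministic estimate for logarithmic means when `α` is not a
Liouville vector. -/
theorem stmt_18 (d : ℕ) (hd : 0 < d)
    (α : Fin d → ℝ) (H σ : ℝ) (hH : 0 < H) (hσ : 0 < σ)
    (hdio : ∀ m : Fin d → ℤ, m ≠ 0 →
      H * znorm m ^ (-σ) ≤ dnint (∑ i, (m i : ℝ) * α i)) :
    ∃ c : ℝ, 0 < c ∧
      ∀ (a : (Fin d → ℤ) → ℂ) (f : (Fin d → ℝ) → ℂ),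
        (Summable fun m => ‖a m‖) →
        (Summable fun m => ‖a m‖ * Real.log (1 + znorm m)) →
        (∀ x : Fin d → ℝ,
          f x = ∑' m : Fin d → ℤ,
            a m * Complex.exp (2 * Real.pi * Complex.I * ((∑ i, (m i : ℝ) * x i : ℝ) : ℂ))) →
        ∀ N : ℕ, 1 ≤ N → ∀ x : Fin d → ℝ,
          ‖logDisc α f N x‖
            ≤ c * (Real.log (1 + N))⁻¹ *
                ∑' m : Fin d → ℤ, ‖a m‖ * Real.log (1 + znorm m) :=
  stmt_18_general d α H σ hH hσ hdio
end
end
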